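/- arXiv:1502.04662 — 4 statements merged into one kernel-verified Lean document; each statement's English description precedes it below -/
import Mathlib

section
/- (Blocked-element lemma.) Let E be a finite set with timestamp map τ : E → ℝ, t_w > 0 a real number, and n a natural number. Suppose T ⊆ E satisfies the layout constraint, a ∈ E \ T, and T ∪ {a} does not satisfy the layout constraint (i.e., a is blocked in T). Then the number of elements e ∈ T with |τ(e) − τ(a)| < t_w is at least n. -/
/-!
If `T ∪ {a}` overfills some window `[t, t + t_w)` while `T` does not, the window must contain `a`,
and then it holds at least `n` elements of `T`. A half-open window of length `t_w` containing
`τ a` lies inside `ball(a)`, so those `n` elements are all within `t_w` of `τ a`.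
-/

/-- A subset `T` of events (with timestamps `τ`) satisfies the layout
constraint if every window `[t, t + t_w)` contains at most `n` events of `T`. -/
def LayoutOk {E : Type*} (τ : E → ℝ) (t_w : ℝ) (n : ℕ) (T : Finset E) : Prop :=
  ∀ t : ℝ, (T.filter fun e => t ≤ τ e ∧ τ e < t + t_w).card ≤ n

open Finset

namespace Finset

variable {α : Type*} [DecidableEq α] {p : α → Prop} [DecidablePred p] {s : Finset α} {a : α} {n : ℕ}

lemma le_card_filter_of_lt_card_filter_insert (h : n < #((insert a s).filter p)) :
    n ≤ #(s.filter p) := by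
  rw [filter_insert] at h
  split_ifs at h
  · exact Nat.le_of_lt_succ (h.trans_le (card_insert_le a _))
  · exact h.le

lemma of_lt_card_filter_insert (hs : #(s.filter p) ≤ n) (h : n < #((insert a s).filter p)) :
    p a := by
  by_contra hpa
  rw [filter_insert, if_neg hpa] at h
  omega

end Finset

lemma abs_sub_lt_of_mem_Ico {α : Type*} [AddCommGroup α] [LinearOrder α] [IsOrderedAddMonoid α]
    {t w x y : α} (hx : x ∈ Set.Ico t (t + w)) (hy : y ∈ Set.Ico t (t + w)) : |y - x| < w :=
  abs_sub_lt_iff.2 ⟨sub_lt_iff_lt_add'.2 (hy.2.trans_le (add_le_add_left hx.1 w)),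
    sub_lt_iff_lt_add'.2 (hx.2.trans_le (add_le_add_left hy.1 w))⟩

theorem blocked_element_lemma_general
    {E : Type*} [DecidableEq E]
    (τ : E → ℝ) (t_w : ℝ) (n : ℕ)
    (T : Finset E) (hT : LayoutOk τ t_w n T)
    (a : E) (hblocked : ¬ LayoutOk τ t_w n (insert a T)) :
    n ≤ (T.filter fun e => |τ e - τ a| < t_w).card := by
  obtain ⟨t, ht⟩ : ∃ t, n < #((insert a T).filter fun e => t ≤ τ e ∧ τ e < t + t_w) := by
    simpa [LayoutOk] using hblocked
  have ha := of_lt_card_filter_insert (hT t) ht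
  calc n ≤ #(T.filter fun e => t ≤ τ e ∧ τ e < t + t_w) :=
        le_card_filter_of_lt_card_filter_insert ht
    _ ≤ #(T.filter fun e => |τ e - τ a| < t_w) :=
        card_le_card <| monotone_filter_right T fun _ _ he => abs_sub_lt_of_mem_Ico ha he

/-- blocked-element lemma: if `T` satisfies the layout
constraint but `T ∪ {a}` does not (i.e. `a` is blocked in `T`), then at least
`n` elements of `T` lie in the ball `(τ a − t_w, τ a + t_w)`. -/
theorem blocked_element_lemma
    {E : Type*} [Fintype E] [DecidableEq E]
    (τ : E → ℝ) (t_w : ℝ) (ht_w : 0 < t_w) (n : ℕ)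
    (T : Finset E) (hT : LayoutOk τ t_w n T)
    (a : E) (ha : a ∉ T) (hblocked : ¬ LayoutOk τ t_w n (insert a T)) :
    n ≤ (T.filter fun e => |τ e - τ a| < t_w).card :=
  blocked_element_lemma_general τ t_w n T hT a hblocked
end

section
/- (Theorem 2: the layout constraint forms a 2-system.) Let E be a finite set with timestamp map τ : E → ℝ, t_w > 0 a real number, and n a natural number. Let Y ⊆ E, and let J₁ and J₂ both be bases of Y, i.e., each J_i ⊆ Y satisfies the layout constraint and for every a ∈ Y \ J_i the set J_i ∪ {a} does not satisfy the layout constraint. Then |J₁| ≤ 2 · |J₂|. -/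
/-- `J` is a base of `Y`: `J ⊆ Y` satisfies the layout constraint and is
maximal with this property, i.e. no element of `Y \ J` can be added. -/
def IsBase {E : Type*} [DecidableEq E] (τ : E → ℝ) (t_w : ℝ) (n : ℕ)
    (Y J : Finset E) : Prop :=
  J ⊆ Y ∧ LayoutOk τ t_w n J ∧
    ∀ a ∈ Y, a ∉ J → ¬ LayoutOk τ t_w n (insert a J)

/-!
For `a ∈ J₁ \ J₂`, maximality of `J₂` yields a window containing `a` in which `J₂` is full, so
in that window `J₁ \ J₂` has no more elements than `J₂ \ J₁`. A minimal subfamily of these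
windows still covering `J₁ \ J₂` covers every point at most twice: among three windows of equal
length through a common point, the one starting in the middle lies in the union of the other two.
Double counting then gives `#(J₁ \ J₂) ≤ 2 * #(J₂ \ J₁)`.
-/

open Finset

theorem Set.Ico_add_subset_union_Ico_add {a b c L : ℝ} (hab : a ≤ b) (hbc : b ≤ c)
    (hca : c ≤ a + L) : Set.Ico b (b + L) ⊆ Set.Ico a (a + L) ∪ Set.Ico c (c + L) := by
  rintro x ⟨hbx, hxb⟩
  by_cases hxa : x < a + L
  · exact Or.inl ⟨hab.trans hbx, hxa⟩
  · exact Or.inr ⟨by linarith, by linarith⟩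

theorem exists_biUnion_Ico_add_subset_biUnion_erase {L p : ℝ} {S : Finset ℝ}
    (hp : 2 < #{s ∈ S | p ∈ Set.Ico s (s + L)}) :
    ∃ m ∈ S, ⋃ s ∈ S, Set.Ico s (s + L) ⊆ ⋃ s ∈ S.erase m, Set.Ico s (s + L) := by
  set F := {s ∈ S | p ∈ Set.Ico s (s + L)}
  have hF : F.Nonempty := card_pos.1 (by omega)
  set lo := F.min' hF
  set hi := F.max' hF
  obtain ⟨m, hm⟩ : ((F.erase lo).erase hi).Nonempty := by
    rw [← card_pos]
    have := pred_card_le_card_erase (s := F) (a := lo)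
    have := pred_card_le_card_erase (s := F.erase lo) (a := hi)
    omega
  obtain ⟨hm_hi, hm_lo, hmF⟩ : m ≠ hi ∧ m ≠ lo ∧ m ∈ F := by simpa using hm
  obtain ⟨hloS, -, hp_lo⟩ := mem_filter.1 (F.min'_mem hF)
  obtain ⟨hhiS, hhi_p, -⟩ := mem_filter.1 (F.max'_mem hF)
  have hwindow (s) (hs : s ∈ S) (hsm : s ≠ m) :
      Set.Ico s (s + L) ⊆ ⋃ s ∈ S.erase m, Set.Ico s (s + L) :=
    Set.subset_iUnion₂ (s := fun s (_ : s ∈ S.erase m) => Set.Ico s (s + L)) s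
      (mem_erase.2 ⟨hsm, hs⟩)
  refine ⟨m, (mem_filter.1 hmF).1, Set.iUnion₂_subset fun s hs => ?_⟩
  by_cases hsm : s = m
  · rw [hsm]
    exact (Set.Ico_add_subset_union_Ico_add (F.min'_le m hmF) (F.le_max' m hmF)
      (hhi_p.trans hp_lo.le)).trans
      (Set.union_subset (hwindow lo hloS hm_lo.symm) (hwindow hi hhiS hm_hi.symm))
  · exact hwindow s hs hsm

theorem exists_subcover_ply_le_two (L : ℝ) {A : Set ℝ} (S : Finset ℝ)
    (hA : A ⊆ ⋃ s ∈ S, Set.Ico s (s + L)) :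
    ∃ S' ⊆ S, A ⊆ ⋃ s ∈ S', Set.Ico s (s + L) ∧
      ∀ p, #{s ∈ S' | p ∈ Set.Ico s (s + L)} ≤ 2 := by
  induction S using Finset.strongInduction with
  | H S ih =>
    by_cases hply : ∀ p, #{s ∈ S | p ∈ Set.Ico s (s + L)} ≤ 2
    · exact ⟨S, subset_rfl, hA, hply⟩
    push Not at hply
    obtain ⟨p, hp⟩ := hply
    obtain ⟨m, hmS, hm⟩ := exists_biUnion_Ico_add_subset_biUnion_erase hp
    obtain ⟨S', hS', hcover, hply⟩ := ih _ (erase_ssubset hmS) (hA.trans hm)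
    exact ⟨S', hS'.trans (erase_subset m S), hcover, hply⟩

theorem Finset.card_le_mul_card_of_bipartite {α β : Type*} (r : α → β → Prop)
    [∀ a b, Decidable (r a b)] {A B : Finset α} {S : Finset β} {k : ℕ}
    (hA : ∀ a ∈ A, (S.bipartiteAbove r a).Nonempty)
    (hAB : ∀ s ∈ S, #(A.bipartiteBelow r s) ≤ #(B.bipartiteBelow r s))
    (hB : ∀ b ∈ B, #(S.bipartiteAbove r b) ≤ k) :
    #A ≤ k * #B :=
  calc #A = ∑ _a ∈ A, 1 := card_eq_sum_ones A
    _ ≤ ∑ a ∈ A, #(S.bipartiteAbove r a) := sum_le_sum fun a ha => card_pos.2 (hA a ha)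
    _ = ∑ s ∈ S, #(A.bipartiteBelow r s) := sum_card_bipartiteAbove_eq_sum_card_bipartiteBelow r
    _ ≤ ∑ s ∈ S, #(B.bipartiteBelow r s) := sum_le_sum hAB
    _ = ∑ b ∈ B, #(S.bipartiteAbove r b) :=
      (sum_card_bipartiteAbove_eq_sum_card_bipartiteBelow r).symm
    _ ≤ ∑ _b ∈ B, k := sum_le_sum hB
    _ = k * #B := by rw [sum_const, smul_eq_mul, mul_comm]

theorem Finset.card_le_mul_card_of_card_sdiff_le {α : Type*} [DecidableEq α] {A B : Finset α}
    {k : ℕ} (hk : 1 ≤ k) (h : #(A \ B) ≤ k * #(B \ A)) : #A ≤ k * #B := by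
  have hA := card_sdiff_add_card_inter A B
  have hB := card_sdiff_add_card_inter B A
  rw [inter_comm] at hB
  nlinarith

theorem Finset.card_filter_sdiff_le_card_filter_sdiff {α : Type*} [DecidableEq α]
    (p : α → Prop) [DecidablePred p] {A B : Finset α} (h : #{a ∈ A | p a} ≤ #{b ∈ B | p b}) :
    #{a ∈ A \ B | p a} ≤ #{b ∈ B \ A | p b} := by
  have filter_sdiff (A B : Finset α) : {a ∈ A \ B | p a} = {a ∈ A | p a} \ {b ∈ B | p b} := by
    ext; simp only [mem_filter, mem_sdiff]; tauto
  rw [filter_sdiff, filter_sdiff]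
  exact card_sdiff_le_card_sdiff_iff.2 h

theorem LayoutOk.exists_full_window {E : Type*} [DecidableEq E] {τ : E → ℝ} {t_w : ℝ} {n : ℕ}
    {J : Finset E} {a : E} (hJ : LayoutOk τ t_w n J) (ha : ¬ LayoutOk τ t_w n (insert a J)) :
    ∃ t, τ a ∈ Set.Ico t (t + t_w) ∧ n ≤ #{e ∈ J | t ≤ τ e ∧ τ e < t + t_w} := by
  unfold LayoutOk at ha
  push Not at ha
  obtain ⟨t, ht⟩ := ha
  by_cases hat : t ≤ τ a ∧ τ a < t + t_w
  · rw [filter_insert, if_pos hat] at ht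
    exact ⟨t, hat, Nat.le_of_lt_succ (ht.trans_le (card_insert_le _ _))⟩
  · rw [filter_insert, if_neg hat] at ht
    exact absurd (hJ t) ht.not_ge

theorem layout_constraint_two_system_general
    {E : Type*} [DecidableEq E]
    (τ : E → ℝ) (t_w : ℝ) (n : ℕ)
    (Y J₁ J₂ : Finset E)
    (h₁ : IsBase τ t_w n Y J₁) (h₂ : IsBase τ t_w n Y J₂) :
    J₁.card ≤ 2 * J₂.card := by
  have hfull : ∀ a ∈ J₁ \ J₂, ∃ t, τ a ∈ Set.Ico t (t + t_w) ∧
      n ≤ #{e ∈ J₂ | t ≤ τ e ∧ τ e < t + t_w} := fun a ha =>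
    h₂.2.1.exists_full_window (h₂.2.2 a (h₁.1 (mem_sdiff.1 ha).1) (mem_sdiff.1 ha).2)
  choose! start hstart_mem hstart_full using hfull
  obtain ⟨S, hS, hcover, hply⟩ := exists_subcover_ply_le_two t_w ((J₁ \ J₂).image start)
    (A := τ '' ↑(J₁ \ J₂)) <| Set.image_subset_iff.2 fun a ha =>
      Set.mem_iUnion₂.2 ⟨start a, mem_image_of_mem start ha, hstart_mem a ha⟩
  refine card_le_mul_card_of_card_sdiff_le one_le_two <|
    card_le_mul_card_of_bipartite (fun e t => τ e ∈ Set.Ico t (t + t_w)) (S := S) ?_ ?_ ?_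
  · intro a ha
    obtain ⟨s, hs, has⟩ := Set.mem_iUnion₂.1 (hcover (Set.mem_image_of_mem τ ha))
    exact ⟨s, mem_filter.2 ⟨hs, has⟩⟩
  · intro s hs
    obtain ⟨a, ha, rfl⟩ := mem_image.1 (hS hs)
    exact card_filter_sdiff_le_card_filter_sdiff _ ((h₁.2.1 (start a)).trans (hstart_full a ha))
  · exact fun b _ => hply (τ b)

/-- Theorem 2 of the paper: the layout constraint forms a
2-system; i.e. any two bases of the same set `Y` have cardinalities within a
factor of 2 of each other. -/
theorem layout_constraint_two_system
    {E : Type*} [Fintype E] [DecidableEq E]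
    (τ : E → ℝ) (t_w : ℝ) (ht_w : 0 < t_w) (n : ℕ)
    (Y J₁ J₂ : Finset E)
    (h₁ : IsBase τ t_w n Y J₁) (h₂ : IsBase τ t_w n Y J₂) :
    J₁.card ≤ 2 * J₂.card :=
  layout_constraint_two_system_general τ t_w n Y J₁ J₂ h₁ h₂
end

section
/- (Lemma 3: greedy achieves a 1/(p+1) approximation on p-systems.) Let X be a finite set, let ℐ be a family of subsets of X that is downward closed (A ∈ ℐ and B ⊆ A imply B ∈ ℐ) with ∅ ∈ ℐ, and suppose (X, ℐ) is a p-system for a positive integer p: for every Y ⊆ X and any two sets J₁, J₂ ⊆ Y that are each maximal elements of ℐ contained in Y, |J₁| ≤ p · |J₂|. Let f : 2^X → ℝ be monotone, submodular, nonnegative, with f(∅) = 0. Let e₁, …, e_k be a greedy sequence: writing S₀ = ∅ and S_i = {e₁, …, e_i}, each S_i ∈ ℐ, each e_{i+1} maximizes f(S_i ∪ {e}) over all e ∈ X \ S_i with S_i ∪ {e} ∈ ℐ, and S_k is maximal in ℐ (there is no e ∈ X \ S_k with S_k ∪ {e} ∈ ℐ). Then for every T ∈ ℐ, (p + 1) ·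 f(S_k) ≥ f(T). -/
/-!
Let `σ(t)` be the last stage `i < k` at which `t ∈ T \ S_k` could still be added to the greedy set
`S_i`. By greedy choice and submodularity, the marginal value of `t` at `S_k` is at most the gain
`δ_{σ(t)} = f(S_{σ(t)+1}) - f(S_{σ(t)})`. The elements with `σ(t) < i` form an independent set
blocked by `S_i`, so the `p`-system property bounds their number by `p · |S_i| = p · i`. Since the
gains `δ_i` are nonnegative and nonincreasing, Abel summation turns these counts into
`∑ δ_{σ(t)} ≤ p · ∑ δ_i = p · f(S_k)`, and submodularity gives `f(T) ≤ f(S_k) + ∑ δ_{σ(t)}`.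
-/

open Finset

def IsBaseOf {X : Type*} [DecidableEq X] (I : Finset X → Prop) (Y J : Finset X) : Prop :=
  J ⊆ Y ∧ I J ∧ ∀ a ∈ Y, a ∉ J → ¬ I (insert a J)

def IsPSystem {X : Type*} [DecidableEq X] (I : Finset X → Prop) (p : ℕ) : Prop :=
  ∀ Y J₁ J₂ : Finset X, IsBaseOf I Y J₁ → IsBaseOf I Y J₂ → J₁.card ≤ p * J₂.card

section IndependenceSystem

variable {X : Type*} [DecidableEq X] {I : Finset X → Prop}

theorem exists_isBaseOf_superset {Y J : Finset X} (hJY : J ⊆ Y) (hJ : I J) :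
    ∃ J', J ⊆ J' ∧ IsBaseOf I Y J' := by
  classical
  obtain ⟨J', hJ'mem, hmax⟩ :=
    (Y.powerset.filter fun B => J ⊆ B ∧ I B).exists_max_image card ⟨J, by simp [hJY, hJ]⟩
  simp only [mem_filter, mem_powerset] at hJ'mem
  obtain ⟨hJ'Y, hJJ', hIJ'⟩ := hJ'mem
  refine ⟨J', hJJ', hJ'Y, hIJ', fun a ha haJ' hIa => ?_⟩
  have := hmax (insert a J') <| by
    simp [insert_subset_iff, ha, hJ'Y, hJJ'.trans (subset_insert a J'), hIa]
  rw [card_insert_of_notMem haJ'] at this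
  omega

theorem IsPSystem.card_le_of_isBaseOf {p : ℕ} (hI : IsPSystem I p) {Y J B : Finset X}
    (hJ : IsBaseOf I Y J) (hBY : B ⊆ Y) (hB : I B) : B.card ≤ p * J.card := by
  obtain ⟨B', hBB', hB'⟩ := exists_isBaseOf_superset hBY hB
  exact (card_le_card hBB').trans (hI Y B' J hB' hJ)

end IndependenceSystem

theorem sum_range_mul_nonpos_of_partial_sums_nonpos {k : ℕ} {b d : ℕ → ℝ}
    (hb : ∀ i ≤ k, ∑ j ∈ range i, b j ≤ 0) (hd : AntitoneOn d (Set.Iio k))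
    (hd0 : ∀ i < k, 0 ≤ d i) : ∑ i ∈ range k, b i * d i ≤ 0 := by
  -- Abel summation: since the partial sums are `≤ 0`, the last weight may be lowered to any `x`.
  have key : ∀ n ≤ k, ∀ x, (∀ i < n, x ≤ d i) →
      ∑ i ∈ range n, b i * d i ≤ (∑ j ∈ range n, b j) * x := by
    intro n
    induction n with
    | zero => simp
    | succ n ih =>
      intro hn x hx
      have hdn : ∀ i < n, d n ≤ d i := fun i hi =>
        hd (Set.mem_Iio.2 (by omega)) (Set.mem_Iio.2 (by omega)) hi.le
      calc ∑ i ∈ range (n + 1), b i * d i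
          ≤ (∑ j ∈ range n, b j) * d n + b n * d n := by
            rw [sum_range_succ]; linarith [ih (by omega) (d n) hdn]
        _ = (∑ j ∈ range (n + 1), b j) * d n := by rw [sum_range_succ]; ring
        _ ≤ (∑ j ∈ range (n + 1), b j) * x :=
            mul_le_mul_of_nonpos_left (hx n n.lt_succ_self) (hb (n + 1) hn)
  simpa using key k le_rfl 0 hd0

theorem sum_comp_le_mul_sum_range {α : Type*} {s : Finset α} {σ : α → ℕ} {k p : ℕ}
    {d : ℕ → ℝ} (hσ : ∀ t ∈ s, σ t < k) (hcount : ∀ i ≤ k, #{t ∈ s | σ t < i} ≤ p * i)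
    (hd : AntitoneOn d (Set.Iio k)) (hd0 : ∀ i < k, 0 ≤ d i) :
    ∑ t ∈ s, d (σ t) ≤ p * ∑ i ∈ range k, d i := by
  set c : ℕ → ℝ := fun i => #{t ∈ s | σ t = i}
  have hfiber : ∑ t ∈ s, d (σ t) = ∑ i ∈ range k, c i * d i := by
    rw [← sum_fiberwise_of_maps_to (t := range k) fun t ht => mem_range.2 (hσ t ht)]
    refine sum_congr rfl fun i _ => ?_
    rw [sum_congr rfl fun t ht => by rw [(mem_filter.1 ht).2], sum_const, nsmul_eq_mul]
  have hpartial : ∀ i, ∑ j ∈ range i, c j = #{t ∈ s | σ t < i} := by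
    intro i
    rw [card_eq_sum_card_fiberwise (f := σ) (t := range i)
      fun t ht => mem_range.2 (mem_filter.1 ht).2]
    push_cast
    refine sum_congr rfl fun j hj => ?_
    rw [filter_filter]
    exact congrArg (fun u : Finset α => (#u : ℝ)) <| filter_congr fun t _ =>
      ⟨fun h => ⟨h ▸ mem_range.1 hj, h⟩, And.right⟩
  have habel := sum_range_mul_nonpos_of_partial_sums_nonpos (b := fun i => c i - p)
    (fun i hi => by
      rw [sum_sub_distrib, hpartial, sum_const, card_range, nsmul_eq_mul, sub_nonpos]
      exact_mod_cast (hcount i hi).trans_eq (mul_comm p i)) hd hd0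
  simp only [sub_mul, sum_sub_distrib, ← mul_sum, sub_nonpos] at habel
  rwa [hfiber]

theorem le_add_sum_sdiff_of_submodular {X : Type*} [DecidableEq X] {f : Finset X → ℝ}
    (hsub : ∀ A B : Finset X, A ⊆ B → ∀ e : X, e ∉ B →
      f (insert e B) - f B ≤ f (insert e A) - f A) (A B : Finset X) :
    f (A ∪ B) ≤ f A + ∑ t ∈ B \ A, (f (insert t A) - f A) := by
  suffices h : ∀ C : Finset X, Disjoint A C → f (A ∪ C) ≤ f A + ∑ t ∈ C, (f (insert t A) - f A) by
    simpa [union_sdiff_self_eq_union] using h (B \ A) disjoint_sdiff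
  intro C
  induction C using Finset.induction_on with
  | empty => simp
  | insert a C ha ih =>
    intro hAC
    rw [disjoint_insert_right] at hAC
    have := hsub A (A ∪ C) subset_union_left a (by simp [ha, hAC.1])
    rw [union_insert, sum_insert ha]
    linarith [ih hAC.2]

structure IsGreedyChain {X : Type*} [DecidableEq X] (I : Finset X → Prop) (f : Finset X → ℝ)
    (k : ℕ) (e : ℕ → X) (S : ℕ → Finset X) : Prop where
  eq_image_range : ∀ i, S i = (range i).image e
  feasible : ∀ i ≤ k, I (S i)
  notMem : ∀ i < k, e i ∉ S i
  greedy : ∀ i < k, ∀ x : X, x ∉ S i → I (insert x (S i)) →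
    f (insert x (S i)) ≤ f (insert (e i) (S i))
  maximal : ∀ x : X, x ∉ S k → ¬ I (insert x (S k))

open Classical in
noncomputable def lastAddableStage {X : Type*} [DecidableEq X] (I : Finset X → Prop)
    (S : ℕ → Finset X) (k : ℕ) (t : X) : ℕ :=
  Nat.findGreatest (fun i => t ∉ S i ∧ I (insert t (S i))) k

namespace IsGreedyChain

variable {X : Type*} [DecidableEq X] {I : Finset X → Prop} {f : Finset X → ℝ} {k : ℕ}
  {e : ℕ → X} {S : ℕ → Finset X}

theorem apply_zero (hG : IsGreedyChain I f k e S) : S 0 = ∅ := by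
  simp [hG.eq_image_range]

theorem apply_succ (hG : IsGreedyChain I f k e S) (i : ℕ) : S (i + 1) = insert (e i) (S i) := by
  rw [hG.eq_image_range, hG.eq_image_range, range_add_one, image_insert]

theorem monotone (hG : IsGreedyChain I f k e S) : Monotone S :=
  monotone_nat_of_le_succ fun i => (hG.apply_succ i).symm ▸ subset_insert (e i) (S i)

theorem card_eq (hG : IsGreedyChain I f k e S) {i : ℕ} (hi : i ≤ k) : #(S i) = i := by
  induction i with
  | zero => simp [hG.apply_zero]
  | succ i ih => rw [hG.apply_succ, card_insert_of_notMem (hG.notMem i hi), ih (by omega)]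

theorem marginal_le_gain
    (hsub : ∀ A B : Finset X, A ⊆ B → ∀ e : X, e ∉ B →
      f (insert e B) - f B ≤ f (insert e A) - f A)
    (hG : IsGreedyChain I f k e S) {i j : ℕ} (hik : i < k) (hij : i ≤ j) {t : X}
    (htj : t ∉ S j) (hti : I (insert t (S i))) :
    f (insert t (S j)) - f (S j) ≤ f (S (i + 1)) - f (S i) := by
  have hSij := hG.monotone hij
  have hgreedy := hG.greedy i hik t (fun h => htj (hSij h)) hti
  rw [← hG.apply_succ] at hgreedy
  linarith [hsub (S i) (S j) hSij t htj]

theorem gain_antitoneOn (hdown : ∀ A B : Finset X, I A → B ⊆ A → I B)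
    (hsub : ∀ A B : Finset X, A ⊆ B → ∀ e : X, e ∉ B →
      f (insert e B) - f B ≤ f (insert e A) - f A)
    (hG : IsGreedyChain I f k e S) : AntitoneOn (fun i => f (S (i + 1)) - f (S i)) (Set.Iio k) := by
  intro i hi j hj hij
  have hej : I (insert (e j) (S i)) := hdown _ _ (hG.feasible (j + 1) hj)
    (hG.apply_succ j ▸ insert_subset_insert (e j) (hG.monotone hij))
  have := hG.marginal_le_gain hsub (lt_of_le_of_lt hij hj) hij (hG.notMem j hj) hej
  rwa [← hG.apply_succ] at this

theorem card_le_of_forall_not_addable {p : ℕ} (hP : IsPSystem I p)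
    (hG : IsGreedyChain I f k e S) {i : ℕ} (hi : i ≤ k) {B : Finset X} (hB : I B)
    (hblocked : ∀ t ∈ B, t ∉ S i → ¬ I (insert t (S i))) : #B ≤ p * i := by
  have hbase : IsBaseOf I (S i ∪ B) (S i) :=
    ⟨subset_union_left, hG.feasible i hi, fun a ha haS =>
      hblocked a ((mem_union.1 ha).resolve_left haS) haS⟩
  simpa [hG.card_eq hi] using hP.card_le_of_isBaseOf hbase subset_union_right hB

theorem sum_marginal_le (hdown : ∀ A B : Finset X, I A → B ⊆ A → I B) {p : ℕ}
    (hP : IsPSystem I p) (hmono : ∀ A B : Finset X, A ⊆ B → f A ≤ f B)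
    (hsub : ∀ A B : Finset X, A ⊆ B → ∀ e : X, e ∉ B →
      f (insert e B) - f B ≤ f (insert e A) - f A)
    (hG : IsGreedyChain I f k e S) {T : Finset X} (hT : I T) :
    ∑ t ∈ T \ S k, (f (insert t (S k)) - f (S k)) ≤ p * (f (S k) - f (S 0)) := by
  classical
  set σ := lastAddableStage I S k
  have haddable : ∀ t ∈ T, t ∉ S (σ t) ∧ I (insert t (S (σ t))) := fun t ht =>
    Nat.findGreatest_spec (P := fun i => t ∉ S i ∧ I (insert t (S i))) k.zero_le
      ⟨by simp [hG.apply_zero], hdown T _ hT (by simpa [hG.apply_zero] using ht)⟩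
  have hσ : ∀ t ∈ T \ S k, σ t < k := by
    intro t ht
    obtain ⟨htT, htk⟩ := mem_sdiff.1 ht
    refine (Nat.findGreatest_le k).lt_of_ne fun hk => ?_
    exact hG.maximal t htk (hk ▸ (haddable t htT).2)
  calc ∑ t ∈ T \ S k, (f (insert t (S k)) - f (S k))
      ≤ ∑ t ∈ T \ S k, (f (S (σ t + 1)) - f (S (σ t))) := by
        refine sum_le_sum fun t ht => ?_
        exact hG.marginal_le_gain hsub (hσ t ht) (hσ t ht).le (mem_sdiff.1 ht).2
          (haddable t (mem_sdiff.1 ht).1).2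
    _ ≤ p * ∑ i ∈ range k, (f (S (i + 1)) - f (S i)) := by
        refine sum_comp_le_mul_sum_range hσ (fun i hi => ?_) (hG.gain_antitoneOn hdown hsub)
          fun i hi => sub_nonneg.2 (hmono _ _ (hG.monotone i.le_succ))
        refine hG.card_le_of_forall_not_addable hP hi
          (hdown T _ hT ((filter_subset _ _).trans sdiff_subset)) fun t ht htS hI => ?_
        exact Nat.findGreatest_is_greatest (mem_filter.1 ht).2 hi ⟨htS, hI⟩
    _ = p * (f (S k) - f (S 0)) := by rw [sum_range_sub (fun i => f (S i))]

end IsGreedyChain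

theorem greedy_p_system_approximation_general
    {X : Type*} [DecidableEq X]
    -- independence family: downward closed, contains ∅
    (I : Finset X → Prop)
    (hdown : ∀ A B : Finset X, I A → B ⊆ A → I B)
    -- (X, I) is a p-system, p a positive integer
    (p : ℕ)
    (hpsys : ∀ Y J₁ J₂ : Finset X,
      J₁ ⊆ Y → I J₁ → (∀ a ∈ Y, a ∉ J₁ → ¬ I (insert a J₁)) →
      J₂ ⊆ Y → I J₂ → (∀ a ∈ Y, a ∉ J₂ → ¬ I (insert a J₂)) →
      J₁.card ≤ p * J₂.card)
    -- f monotone, submodular, nonnegative, f ∅ = 0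
    (f : Finset X → ℝ)
    (hmono : ∀ A B : Finset X, A ⊆ B → f A ≤ f B)
    (hsub : ∀ A B : Finset X, A ⊆ B → ∀ e : X, e ∉ B →
      f (insert e B) - f B ≤ f (insert e A) - f A)
    (hfempty : f ∅ = 0)
    -- the greedy sequence e₁, …, e_k with partial solutions S i = {e 0, …, e (i-1)}
    (k : ℕ) (e : ℕ → X)
    (S : ℕ → Finset X) (hS : ∀ i, S i = (Finset.range i).image e)
    (hfeas : ∀ i ≤ k, I (S i))
    (hnew : ∀ i < k, e i ∉ S i)
    (hgreedy : ∀ i < k, ∀ x : X, x ∉ S i → I (insert x (S i)) →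
      f (insert x (S i)) ≤ f (insert (e i) (S i)))
    (hmaximal : ∀ x : X, x ∉ S k → ¬ I (insert x (S k))) :
    ∀ T : Finset X, I T → f T ≤ ((p : ℝ) + 1) * f (S k) := by
  intro T hT
  have hG : IsGreedyChain I f k e S := ⟨hS, hfeas, hnew, hgreedy, hmaximal⟩
  have hP : IsPSystem I p := fun Y J₁ J₂ h₁ h₂ =>
    hpsys Y J₁ J₂ h₁.1 h₁.2.1 h₁.2.2 h₂.1 h₂.2.1 h₂.2.2
  have hcharge := hG.sum_marginal_le hdown hP hmono hsub hT
  rw [hG.apply_zero, hfempty, sub_zero] at hcharge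
  calc f T ≤ f (S k ∪ T) := hmono _ _ subset_union_right
    _ ≤ f (S k) + ∑ t ∈ T \ S k, (f (insert t (S k)) - f (S k)) :=
        le_add_sum_sdiff_of_submodular hsub (S k) T
    _ ≤ ((p : ℝ) + 1) * f (S k) := by linarith

/-- Lemma 3: the greedy algorithm achieves a `1/(p+1)`
approximation for maximizing a monotone submodular nonnegative set function
over a `p`-system. -/
theorem greedy_p_system_approximation
    {X : Type*} [Fintype X] [DecidableEq X]
    -- independence family: downward closed, contains ∅
    (I : Finset X → Prop)
    (hdown : ∀ A B : Finset X, I A → B ⊆ A → I B)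
    (hempty : I ∅)
    -- (X, I) is a p-system, p a positive integer
    (p : ℕ) (hp : 1 ≤ p)
    (hpsys : ∀ Y J₁ J₂ : Finset X,
      J₁ ⊆ Y → I J₁ → (∀ a ∈ Y, a ∉ J₁ → ¬ I (insert a J₁)) →
      J₂ ⊆ Y → I J₂ → (∀ a ∈ Y, a ∉ J₂ → ¬ I (insert a J₂)) →
      J₁.card ≤ p * J₂.card)
    -- f monotone, submodular, nonnegative, f ∅ = 0
    (f : Finset X → ℝ)
    (hmono : ∀ A B : Finset X, A ⊆ B → f A ≤ f B)
    (hsub : ∀ A B : Finset X, A ⊆ B → ∀ e : X, e ∉ B →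
      f (insert e B) - f B ≤ f (insert e A) - f A)
    (hnonneg : ∀ S : Finset X, 0 ≤ f S)
    (hfempty : f ∅ = 0)
    -- the greedy sequence e₁, …, e_k with partial solutions S i = {e 0, …, e (i-1)}
    (k : ℕ) (e : ℕ → X)
    (S : ℕ → Finset X) (hS : ∀ i, S i = (Finset.range i).image e)
    (hfeas : ∀ i ≤ k, I (S i))
    (hnew : ∀ i < k, e i ∉ S i)
    (hgreedy : ∀ i < k, ∀ x : X, x ∉ S i → I (insert x (S i)) →
      f (insert x (S i)) ≤ f (insert (e i) (S i)))
    (hmaximal : ∀ x : X, x ∉ S k → ¬ I (insert x (S k))) :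
    ∀ T : Finset X, I T → f T ≤ ((p : ℝ) + 1) * f (S k) :=
  greedy_p_system_approximation_general I hdown p hpsys f hmono hsub hfempty k e S hS hfeas hnew
    hgreedy hmaximal
end

section
/- (Theorem 3: GreedyTimeline achieves a 1/3 approximation.) Let E be a finite set with timestamp map τ : E → ℝ, t_w > 0 a real number, and n a natural number; let ℐ be the family of subsets of E satisfying the layout constraint. Let f : 2^E → ℝ be a nonnegative linear combination of weighted coverage functions: f(T) = Σ_{i=1}^{k} c_i · (Σ_{a ∈ g_i[T]} w_i(a)) with maps g_i : E → α_i, nonnegative weights w_i : α_i → ℝ, and coefficients c_i ≥ 0. Let T̂ = S_k be the output of the greedy algorithm: writing S₀ = ∅ and S_i = {e₁, …, e_i}, each S_i ∈ ℐ, each e_{i+1} maximizes f(S_i ∪ {e}) over all e ∈ E \ S_i with S_i ∪ {e} ∈ ℐ, and S_k is maximal in ℐ. Then for every T* ∈ ℐ, 3 · f(T̂) ≥ f(T*); in particular f(T̂) is at least one third of the maximum of f over ℐ. -/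
open Finset

theorem Nat.exists_lt_and_not_succ_of_not {P : ℕ → Prop} {k : ℕ} (h₀ : P 0) (hk : ¬ P k) :
    ∃ j < k, P j ∧ ¬ P (j + 1) := by
  induction k with
  | zero => exact absurd h₀ hk
  | succ k ih =>
    by_cases hPk : P k
    · exact ⟨k, k.lt_add_one, hPk, hk⟩
    · obtain ⟨j, hj, h⟩ := ih hPk
      exact ⟨j, hj.trans k.lt_add_one, h⟩

theorem sum_range_mul_le_mul_sum_range {m δ : ℕ → ℝ} {p : ℝ} {k : ℕ}
    (hm : ∀ j ≤ k, ∑ i ∈ range j, m i ≤ j * p)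
    (hδ : ∀ j, j + 1 < k → δ (j + 1) ≤ δ j) (hδ₀ : ∀ j < k, 0 ≤ δ j) :
    ∑ i ∈ range k, m i * δ i ≤ p * ∑ i ∈ range k, δ i := by
  rcases Nat.eq_zero_or_pos k with rfl | hk
  · simp
  have hG : ∀ j ≤ k, 0 ≤ ∑ i ∈ range j, (p - m i) := fun j hj => by
    rw [sum_sub_distrib, sum_const, card_range, nsmul_eq_mul]
    linarith [hm j hj]
  suffices 0 ≤ ∑ i ∈ range k, δ i • (p - m i) by
    simp only [smul_eq_mul, mul_sub, sum_sub_distrib, ← sum_mul] at this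
    simp only [mul_comm (m _)]
    linarith
  rw [sum_range_by_parts, sub_nonneg]
  calc ∑ i ∈ range (k - 1), (δ (i + 1) - δ i) • ∑ l ∈ range (i + 1), (p - m l)
      ≤ 0 := sum_nonpos fun i hi => mul_nonpos_of_nonpos_of_nonneg
        (sub_nonpos.2 (hδ i (by simp at hi; omega))) (hG _ (by simp at hi; omega))
    _ ≤ δ (k - 1) • ∑ l ∈ range k, (p - m l) := mul_nonneg (hδ₀ _ (by omega)) (hG k le_rfl)

theorem sum_comp_le_mul_sum_range_s11 {ι : Type*} {D : Finset ι} {φ : ι → ℕ} {δ : ℕ → ℝ}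
    {p k : ℕ} (hφ : ∀ x ∈ D, φ x < k) (hcard : ∀ j ≤ k, #{x ∈ D | φ x < j} ≤ p * j)
    (hδ : ∀ j, j + 1 < k → δ (j + 1) ≤ δ j) (hδ₀ : ∀ j < k, 0 ≤ δ j) :
    ∑ x ∈ D, δ (φ x) ≤ p * ∑ j ∈ range k, δ j := by
  have hfiber : ∀ j, ∑ i ∈ range j, (#{x ∈ D | φ x = i} : ℝ) = #{x ∈ D | φ x < j} := by
    intro j
    rw [card_eq_sum_card_fiberwise (t := range j) fun x hx => by simpa using (mem_filter.1 hx).2]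
    push_cast
    refine sum_congr rfl fun i hi => ?_
    rw [filter_filter]
    congr 2
    exact filter_congr fun x _ => by simp only [mem_range] at hi; omega
  calc ∑ x ∈ D, δ (φ x)
      = ∑ j ∈ range k, (#{x ∈ D | φ x = j} : ℝ) * δ j := by
        rw [← sum_fiberwise_of_maps_to' (t := range k) fun x hx => mem_range.2 (hφ x hx)]
        simp only [sum_const, nsmul_eq_mul]
    _ ≤ p * ∑ j ∈ range k, δ j := sum_range_mul_le_mul_sum_range
        (fun j hj => by rw [hfiber, mul_comm]; exact_mod_cast hcard j hj) hδ hδ₀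

namespace LayoutOk

variable {E : Type*} {τ : E → ℝ} {t_w : ℝ} {n : ℕ}

theorem mono {A B : Finset E} (hAB : A ⊆ B) (hB : LayoutOk τ t_w n B) : LayoutOk τ t_w n A :=
  fun t => (card_le_card (filter_subset_filter _ hAB)).trans (hB t)

variable [DecidableEq E]

theorem card_filter_abs_sub_lt_le {B : Finset E} (hB : LayoutOk τ t_w n B) (x : ℝ) :
    #{b ∈ B | |τ b - x| < t_w} ≤ 2 * n := by
  have hcover : {b ∈ B | |τ b - x| < t_w} ⊆
      {b ∈ B | x - t_w ≤ τ b ∧ τ b < x - t_w + t_w} ∪ {b ∈ B | x ≤ τ b ∧ τ b < x + t_w} := by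
    intro b
    simp only [mem_union, mem_filter, abs_sub_lt_iff]
    rintro ⟨hb, h₁, h₂⟩
    rcases lt_or_ge (τ b) x with h | h
    · exact Or.inl ⟨hb, by linarith, by linarith⟩
    · exact Or.inr ⟨hb, h, by linarith⟩
  calc _ ≤ _ := card_le_card hcover
    _ ≤ _ := card_union_le _ _
    _ ≤ n + n := add_le_add (hB _) (hB _)
    _ = 2 * n := (two_mul n).symm

theorem exists_window_of_not_insert {S : Finset E} {b : E} (hS : LayoutOk τ t_w n S)
    (hb : ¬ LayoutOk τ t_w n (insert b S)) :
    ∃ t, (t ≤ τ b ∧ τ b < t + t_w) ∧ n ≤ #{s ∈ S | t ≤ τ s ∧ τ s < t + t_w} := by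
  simp only [LayoutOk, not_forall, not_le] at hb
  obtain ⟨t, ht⟩ := hb
  by_cases hbt : t ≤ τ b ∧ τ b < t + t_w
  · rw [filter_insert, if_pos hbt] at ht
    exact ⟨t, hbt, Nat.lt_succ_iff.1 (ht.trans_le (card_insert_le _ _))⟩
  · rw [filter_insert, if_neg hbt] at ht
    exact absurd (hS t) ht.not_ge

/-- Each blocked `b ∈ B` has a window holding `n` elements of `S`, and each `s ∈ S` lies in the
windows of at most `2n` elements of `B`, namely those within distance `t_w` of `s`. -/
theorem card_le_two_mul {S B : Finset E} (hS : LayoutOk τ t_w n S) (hB : LayoutOk τ t_w n B)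
    (hblocked : ∀ b ∈ B, ¬ LayoutOk τ t_w n (insert b S)) : #B ≤ 2 * #S := by
  choose! t hbt hSt using fun b hb => hS.exists_window_of_not_insert (hblocked b hb)
  rcases Nat.eq_zero_or_pos n with rfl | hn
  · suffices B = ∅ by simp [this]
    refine eq_empty_of_forall_notMem fun b hb => ?_
    exact (card_pos.2 ⟨b, mem_filter.2 ⟨hb, hbt b hb⟩⟩).ne' (Nat.le_zero.1 (hB (t b)))
  have hcount : #B * n ≤ #S * (2 * n) :=
    card_mul_le_card_mul (fun b s => t b ≤ τ s ∧ τ s < t b + t_w) hSt fun s _ =>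
      (card_le_card fun b hb => by
        simp only [bipartiteBelow, mem_filter, abs_sub_lt_iff] at hb ⊢
        obtain ⟨hb, h₁, h₂⟩ := hb
        exact ⟨hb, by linarith [hbt b hb], by linarith [hbt b hb]⟩).trans
      (hB.card_filter_abs_sub_lt_le (τ s))
  nlinarith

end LayoutOk

section SetFunction

variable {E : Type*}

theorem monotone_sum_mul {ι : Type*} {s : Finset ι} {c : ι → ℝ} {F : ι → Finset E → ℝ}
    (hc : ∀ i ∈ s, 0 ≤ c i) (hF : ∀ i ∈ s, Monotone (F i)) :
    Monotone fun T => ∑ i ∈ s, c i * F i T :=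
  fun _ _ hAB => sum_le_sum fun i hi => mul_le_mul_of_nonneg_left (hF i hi hAB) (hc i hi)

theorem monotone_sum_image {α : Type*} [DecidableEq α] {g : E → α} {w : α → ℝ}
    (hw : ∀ a, 0 ≤ w a) : Monotone fun T : Finset E => ∑ a ∈ T.image g, w a :=
  fun _ _ hAB => sum_le_sum_of_subset_of_nonneg (image_subset_image hAB) fun a _ _ => hw a

variable [DecidableEq E]

def HasDiminishingReturns (f : Finset E → ℝ) : Prop :=
  ∀ ⦃A B : Finset E⦄, A ⊆ B → ∀ x, f (insert x B) - f B ≤ f (insert x A) - f A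

theorem HasDiminishingReturns.apply_union_le {f : Finset E → ℝ} (hf : HasDiminishingReturns f)
    (D C : Finset E) : f (D ∪ C) ≤ f C + ∑ x ∈ D, (f (insert x C) - f C) := by
  induction D using Finset.induction_on with
  | empty => simp
  | insert x D hx ih =>
    rw [insert_union, sum_insert hx]
    linarith [hf (subset_union_right : C ⊆ D ∪ C) x]

theorem HasDiminishingReturns.sum_mul {ι : Type*} {s : Finset ι} {c : ι → ℝ}
    {F : ι → Finset E → ℝ} (hc : ∀ i ∈ s, 0 ≤ c i) (hF : ∀ i ∈ s, HasDiminishingReturns (F i)) :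
    HasDiminishingReturns fun T => ∑ i ∈ s, c i * F i T := by
  intro A B hAB x
  simp only [← sum_sub_distrib, ← mul_sub]
  exact sum_le_sum fun i hi => mul_le_mul_of_nonneg_left (hF i hi hAB x) (hc i hi)

theorem hasDiminishingReturns_sum_image {α : Type*} [DecidableEq α] {g : E → α} {w : α → ℝ}
    (hw : ∀ a, 0 ≤ w a) : HasDiminishingReturns fun T : Finset E => ∑ a ∈ T.image g, w a := by
  intro A B hAB x
  simp only [image_insert]
  by_cases hB : g x ∈ B.image g
  · rw [insert_eq_of_mem hB, sub_self, sub_nonneg]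
    exact sum_le_sum_of_subset_of_nonneg (subset_insert _ _) fun a _ _ => hw a
  · have hA : g x ∉ A.image g := fun h => hB (image_subset_image hAB h)
    rw [sum_insert hB, sum_insert hA]
    simp

end SetFunction

section Greedy

variable {E : Type*} [DecidableEq E] {I : Finset E → Prop} {f : Finset E → ℝ} {k : ℕ}
  {e : ℕ → E} {S : ℕ → Finset E}

theorem monotone_of_eq_image_range (hS : ∀ i, S i = (range i).image e) : Monotone S :=
  fun i j hij => by simpa only [hS] using image_subset_image (range_subset_range.2 hij)

theorem succ_eq_insert_of_eq_image_range (hS : ∀ i, S i = (range i).image e) (i : ℕ) :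
    S (i + 1) = insert (e i) (S i) := by
  rw [hS, hS, range_add_one, image_insert]

theorem apply_insert_le_apply_succ (hf : Monotone f) (hS : ∀ i, S i = (range i).image e)
    (hgreedy : ∀ i < k, ∀ x : E, x ∉ S i → I (insert x (S i)) →
      f (insert x (S i)) ≤ f (insert (e i) (S i)))
    {i : ℕ} (hi : i < k) {x : E} (hx : I (insert x (S i))) :
    f (insert x (S i)) ≤ f (S (i + 1)) := by
  by_cases hxS : x ∈ S i
  · rw [insert_eq_of_mem hxS]
    exact hf (monotone_of_eq_image_range hS i.le_succ)
  · rw [succ_eq_insert_of_eq_image_range hS]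
    exact hgreedy i hi x hxS hx

theorem greedy_increment_succ_le (hI : ∀ ⦃A B⦄, A ⊆ B → I B → I A) (hf : Monotone f)
    (hsub : HasDiminishingReturns f) (hS : ∀ i, S i = (range i).image e)
    (hfeas : ∀ i ≤ k, I (S i))
    (hgreedy : ∀ i < k, ∀ x : E, x ∉ S i → I (insert x (S i)) →
      f (insert x (S i)) ≤ f (insert (e i) (S i)))
    {j : ℕ} (hj : j + 1 < k) :
    f (S (j + 2)) - f (S (j + 1)) ≤ f (S (j + 1)) - f (S j) := by
  have hSj := monotone_of_eq_image_range hS j.le_succ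
  have hfeas' : I (insert (e (j + 1)) (S j)) := by
    refine hI ?_ (hfeas (j + 2) hj)
    rw [succ_eq_insert_of_eq_image_range hS (j + 1)]
    exact insert_subset_insert _ hSj
  calc f (S (j + 2)) - f (S (j + 1))
      = f (insert (e (j + 1)) (S (j + 1))) - f (S (j + 1)) := by
        rw [succ_eq_insert_of_eq_image_range hS (j + 1)]
    _ ≤ f (insert (e (j + 1)) (S j)) - f (S j) := hsub hSj _
    _ ≤ f (S (j + 1)) - f (S j) :=
        sub_le_sub_right (apply_insert_le_apply_succ hf hS hgreedy (by omega) hfeas') _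

theorem marginal_le_greedy_increment (hf : Monotone f) (hsub : HasDiminishingReturns f)
    (hS : ∀ i, S i = (range i).image e)
    (hgreedy : ∀ i < k, ∀ x : E, x ∉ S i → I (insert x (S i)) →
      f (insert x (S i)) ≤ f (insert (e i) (S i)))
    {j : ℕ} (hj : j < k) {x : E} (hx : I (insert x (S j))) :
    f (insert x (S k)) - f (S k) ≤ f (S (j + 1)) - f (S j) :=
  calc f (insert x (S k)) - f (S k) ≤ f (insert x (S j)) - f (S j) :=
        hsub (monotone_of_eq_image_range hS hj.le) x
    _ ≤ f (S (j + 1)) - f (S j) :=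
        sub_le_sub_right (apply_insert_le_apply_succ hf hS hgreedy hj hx) _

theorem greedy_approximation {p : ℕ} (hI : ∀ ⦃A B⦄, A ⊆ B → I B → I A)
    (hp : ∀ ⦃A B⦄, I A → I B → (∀ b ∈ B, ¬ I (insert b A)) → #B ≤ p * #A)
    (hf : Monotone f) (hsub : HasDiminishingReturns f) (hf₀ : 0 ≤ f ∅)
    (hS : ∀ i, S i = (range i).image e) (hfeas : ∀ i ≤ k, I (S i))
    (hgreedy : ∀ i < k, ∀ x : E, x ∉ S i → I (insert x (S i)) →
      f (insert x (S i)) ≤ f (insert (e i) (S i)))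
    (hmaximal : ∀ x : E, x ∉ S k → ¬ I (insert x (S k)))
    {T : Finset E} (hT : I T) : f T ≤ (p + 1) * f (S k) := by
  set D := T \ S k
  have hS₀ : S 0 = ∅ := by rw [hS, range_zero, image_empty]
  have hlast : ∀ x ∈ D, ∃ j < k, I (insert x (S j)) ∧ ¬ I (insert x (S (j + 1))) := by
    intro x hx
    obtain ⟨hxT, hxS⟩ := mem_sdiff.1 hx
    refine Nat.exists_lt_and_not_succ_of_not (P := fun j => I (insert x (S j))) ?_ (hmaximal x hxS)
    exact hI (by simpa [hS₀] using hxT) hT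
  choose! φ hφk hφ hφ' using hlast
  have hcard : ∀ j ≤ k, #{x ∈ D | φ x < j} ≤ p * j := fun j hj =>
    calc #{x ∈ D | φ x < j} ≤ p * #(S j) := by
          refine hp (hfeas j hj) (hI ((filter_subset _ _).trans sdiff_subset) hT) fun x hx h => ?_
          obtain ⟨hxD, hxj⟩ := mem_filter.1 hx
          exact hφ' x hxD (hI (insert_subset_insert _ (monotone_of_eq_image_range hS hxj)) h)
      _ ≤ p * j := Nat.mul_le_mul_left _ (by rw [hS]; exact card_image_le.trans (card_range j).le)
  calc f T ≤ f (D ∪ S k) := hf (by simp [D])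
    _ ≤ f (S k) + ∑ x ∈ D, (f (insert x (S k)) - f (S k)) := hsub.apply_union_le D (S k)
    _ ≤ f (S k) + ∑ x ∈ D, (f (S (φ x + 1)) - f (S (φ x))) :=
        add_le_add_right (sum_le_sum fun x hx =>
          marginal_le_greedy_increment hf hsub hS hgreedy (hφk x hx) (hφ x hx)) _
    _ ≤ f (S k) + p * ∑ j ∈ range k, (f (S (j + 1)) - f (S j)) := by
        gcongr
        exact sum_comp_le_mul_sum_range_s11 (δ := fun j => f (S (j + 1)) - f (S j)) hφk hcard
          (fun j hj => greedy_increment_succ_le hI hf hsub hS hfeas hgreedy hj)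
          fun j _ => sub_nonneg.2 (hf (monotone_of_eq_image_range hS j.le_succ))
    _ = f (S k) + p * (f (S k) - f ∅) := by rw [sum_range_sub (fun j => f (S j)), hS₀]
    _ ≤ (p + 1) * f (S k) := by nlinarith [mul_nonneg p.cast_nonneg hf₀]

end Greedy

theorem greedyTimeline_one_third_approximation_general
    {E : Type*} [DecidableEq E]
    (τ : E → ℝ) (t_w : ℝ) (n : ℕ)
    -- f is a nonnegative linear combination of weighted coverage functions
    (k' : ℕ) (α : Fin k' → Type*) [∀ i, DecidableEq (α i)]
    (g : (i : Fin k') → E → α i)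
    (w : (i : Fin k') → α i → ℝ) (hw : ∀ i a, 0 ≤ w i a)
    (c : Fin k' → ℝ) (hc : ∀ i, 0 ≤ c i)
    (f : Finset E → ℝ)
    (hf : ∀ T : Finset E, f T = ∑ i, c i * ∑ a ∈ T.image (g i), w i a)
    -- the greedy sequence e₁, …, e_k with partial solutions S i = {e 0, …, e (i-1)}
    (k : ℕ) (e : ℕ → E)
    (S : ℕ → Finset E) (hS : ∀ i, S i = (Finset.range i).image e)
    (hfeas : ∀ i ≤ k, LayoutOk τ t_w n (S i))
    (hgreedy : ∀ i < k, ∀ x : E, x ∉ S i → LayoutOk τ t_w n (insert x (S i)) →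
      f (insert x (S i)) ≤ f (insert (e i) (S i)))
    (hmaximal : ∀ x : E, x ∉ S k → ¬ LayoutOk τ t_w n (insert x (S k))) :
    ∀ Tstar : Finset E, LayoutOk τ t_w n Tstar → f Tstar ≤ 3 * f (S k) := by
  intro Tstar hTstar
  have hf_eq : f = fun T => ∑ i, c i * ∑ a ∈ T.image (g i), w i a := funext hf
  have hmono : Monotone f := by
    rw [hf_eq]
    exact monotone_sum_mul (fun i _ => hc i) fun i _ => monotone_sum_image (hw i)
  have hsub : HasDiminishingReturns f := by
    rw [hf_eq]
    exact .sum_mul (fun i _ => hc i) fun i _ => hasDiminishingReturns_sum_image (hw i)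
  exact (greedy_approximation (p := 2) (fun _ _ => LayoutOk.mono)
    (fun _ _ => LayoutOk.card_le_two_mul) hmono hsub (by simp [hf]) hS hfeas hgreedy hmaximal
    hTstar).trans_eq (by norm_num)

/-- Theorem 3: GreedyTimeline achieves a 1/3 approximation.
For the layout-constraint independence family and a relevance objective `f`
that is a nonnegative linear combination of weighted coverage functions, the
greedy solution `T̂ = S k` satisfies `f T* ≤ 3 · f T̂` for every feasible
`T*`. -/
theorem greedyTimeline_one_third_approximation
    {E : Type*} [Fintype E] [DecidableEq E]
    (τ : E → ℝ) (t_w : ℝ) (ht_w : 0 < t_w) (n : ℕ)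
    -- f is a nonnegative linear combination of weighted coverage functions
    (k' : ℕ) (α : Fin k' → Type*) [∀ i, DecidableEq (α i)]
    (g : (i : Fin k') → E → α i)
    (w : (i : Fin k') → α i → ℝ) (hw : ∀ i a, 0 ≤ w i a)
    (c : Fin k' → ℝ) (hc : ∀ i, 0 ≤ c i)
    (f : Finset E → ℝ)
    (hf : ∀ T : Finset E, f T = ∑ i, c i * ∑ a ∈ T.image (g i), w i a)
    -- the greedy sequence e₁, …, e_k with partial solutions S i = {e 0, …, e (i-1)}
    (k : ℕ) (e : ℕ → E)
    (S : ℕ → Finset E) (hS : ∀ i, S i = (Finset.range i).image e)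
    (hfeas : ∀ i ≤ k, LayoutOk τ t_w n (S i))
    (hnew : ∀ i < k, e i ∉ S i)
    (hgreedy : ∀ i < k, ∀ x : E, x ∉ S i → LayoutOk τ t_w n (insert x (S i)) →
      f (insert x (S i)) ≤ f (insert (e i) (S i)))
    (hmaximal : ∀ x : E, x ∉ S k → ¬ LayoutOk τ t_w n (insert x (S k))) :
    ∀ Tstar : Finset E, LayoutOk τ t_w n Tstar → f Tstar ≤ 3 * f (S k) :=
  greedyTimeline_one_third_approximation_general τ t_w n k' α g w hw c hc f hf k e S hS hfeas
    hgreedy hmaximal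
end
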